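/- arXiv:math/0511165 — 4 statements merged into one kernel-verified Lean document; each statement's English description precedes it below -/
import Mathlib

section
/- Let E be a reflexive real Banach space, X a real Banach space with a continuous embedding E ↪ X, ψ : E → ℝ≥0 a positively homogeneous function of degree one, and suppose: (H₁) ‖u‖_X ≤ ψ(u)^{1−t}‖u‖_E^t for all u ∈ E, with t ∈ (0,1); I = J − N with J, N ∈ C¹(E,ℝ), J being 2-homogeneous; (H₂) |⟨N'(u),u⟩ − 2N(u)| ≥ a·ψ(u)^μ − c for all u ∈ E, with a, μ > 0, c ∈ ℝ; (H₃) J(u) ≥ k‖u‖² for all u with k > 0; (H₄) |N(u)| ≤ b‖u‖_X^q + d for all u, with b, d > 0, q > 2, and qt < 2. Then every sequence (uₙ) ⊂ E with I(uₙ) → α for some α ∈ ℝ and (1 + ‖uₙ‖)·‖I'(uₙ)‖_{E*} → 0 is bounded in E. -/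
open Filter Topology Asymptotics

/-!
By Euler's identity `⟨J'(u), u⟩ = 2 J(u)`, so `⟨N'(u), u⟩ - 2 N(u) = 2 I(u) - ⟨I'(u), u⟩`,
which tends to `2α` along a Cerami sequence. By (H₂) this bounds `ψ(uₙ)`, and then (H₃), (H₄),
(H₁) give `k ‖uₙ‖² ≤ I(uₙ) + N(uₙ) ≤ A + B ‖uₙ‖^(q t)`; since `q t < 2`, the quadratic term wins
for large `‖uₙ‖`.
-/

theorem fderiv_apply_self_eq_two_mul_of_homogeneous {E : Type*} [NormedAddCommGroup E]
    [NormedSpace ℝ E] {J : E → ℝ} (hJhom : ∀ (τ : ℝ) (u : E), J (τ • u) = τ ^ 2 * J u)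
    {u : E} (hJ : DifferentiableAt ℝ J u) : fderiv ℝ J u u = 2 * J u := by
  have hray : HasDerivAt (fun τ : ℝ => J (τ • u)) (fderiv ℝ J u u) 1 := by
    rw [← one_smul ℝ u] at hJ
    simpa [Function.comp_def] using hJ.hasFDerivAt.comp_hasDerivAt (1 : ℝ)
      ((hasDerivAt_id (1 : ℝ)).smul_const u)
  have hquad : HasDerivAt (fun τ : ℝ => J (τ • u)) (2 * J u) 1 := by
    simp only [hJhom]
    simpa using (hasDerivAt_pow 2 (1 : ℝ)).mul_const (J u)
  exact hray.unique hquad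

theorem tendsto_apply_self_of_tendsto_one_add_norm_mul_norm {E : Type*}
    [NormedAddCommGroup E] [NormedSpace ℝ E] {u : ℕ → E} {L : ℕ → E →L[ℝ] ℝ}
    (h : Tendsto (fun n => (1 + ‖u n‖) * ‖L n‖) atTop (𝓝 0)) :
    Tendsto (fun n => L n (u n)) atTop (𝓝 0) := by
  refine squeeze_zero_norm (fun n => ?_) h
  calc ‖L n (u n)‖ ≤ ‖L n‖ * ‖u n‖ := (L n).le_opNorm (u n)
    _ ≤ (1 + ‖u n‖) * ‖L n‖ := by
      rw [mul_comm]
      gcongr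
      linarith

theorem rpow_isLittleO_sq_atTop {s : ℝ} (hs : s < 2) :
    (fun x : ℝ => x ^ s) =o[atTop] fun x => x ^ 2 := by
  have hpos : ∀ᶠ x : ℝ in atTop, 0 < x := eventually_gt_atTop 0
  rw [isLittleO_iff_tendsto' (hpos.mono fun x hx h => absurd h (by positivity))]
  refine (tendsto_rpow_neg_atTop (sub_pos.2 hs)).congr' (hpos.mono fun x hx => ?_)
  rw [neg_sub, Real.rpow_sub hx, Real.rpow_two]

theorem exists_le_of_mul_sq_le_add_mul_rpow {k s : ℝ} (hk : 0 < k) (hs : s < 2) (A B : ℝ) :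
    ∃ M, ∀ x : ℝ, k * x ^ 2 ≤ A + B * x ^ s → x ≤ M := by
  have hlo : (fun x : ℝ => A + B * x ^ s) =o[atTop] fun x => x ^ 2 :=
    (isLittleO_const_left.2 <| Or.inr <|
        tendsto_norm_atTop_atTop.comp (tendsto_pow_atTop two_ne_zero)).add
      ((rpow_isLittleO_sq_atTop hs).const_mul_left B)
  obtain ⟨M, hM⟩ := eventually_atTop.1 ((hlo.def (half_pos hk)).and (eventually_gt_atTop 0))
  refine ⟨M, fun x hx => le_of_not_gt fun hMx => ?_⟩
  obtain ⟨hsmall, hxpos⟩ := hM x hMx.le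
  rw [Real.norm_eq_abs, Real.norm_eq_abs, abs_of_nonneg (sq_nonneg x)] at hsmall
  nlinarith [le_abs_self (A + B * x ^ s), mul_pos hk (pow_pos hxpos 2)]

theorem rpow_le_of_le_rpow_mul_rpow {z p P y t q : ℝ} (hz : 0 ≤ z) (hp : 0 ≤ p) (hy : 0 ≤ y)
    (hpP : p ≤ P) (ht : t ≤ 1) (hq : 0 ≤ q) (h : z ≤ p ^ (1 - t) * y ^ t) :
    z ^ q ≤ P ^ ((1 - t) * q) * y ^ (q * t) :=
  calc z ^ q ≤ (p ^ (1 - t) * y ^ t) ^ q := Real.rpow_le_rpow hz h hq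
    _ = p ^ ((1 - t) * q) * y ^ (q * t) := by
      rw [Real.mul_rpow (by positivity) (by positivity), ← Real.rpow_mul hp,
        ← Real.rpow_mul hy, mul_comm t]
    _ ≤ P ^ ((1 - t) * q) * y ^ (q * t) := by gcongr

theorem tendsto_fderiv_apply_self_sub_two_mul_of_cerami {E : Type*} [NormedAddCommGroup E]
    [NormedSpace ℝ E] {J N : E → ℝ} (hJ : Differentiable ℝ J) (hN : Differentiable ℝ N)
    (hJhom : ∀ (τ : ℝ) (u : E), J (τ • u) = τ ^ 2 * J u) {α : ℝ} {u : ℕ → E}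
    (hI : Tendsto (fun n => J (u n) - N (u n)) atTop (𝓝 α))
    (hI' : Tendsto (fun n => (1 + ‖u n‖) * ‖fderiv ℝ (fun v => J v - N v) (u n)‖)
      atTop (𝓝 0)) :
    Tendsto (fun n => fderiv ℝ N (u n) (u n) - 2 * N (u n)) atTop (𝓝 (2 * α)) := by
  have hidentity : ∀ v, fderiv ℝ N v v - 2 * N v
      = 2 * (J v - N v) - fderiv ℝ (fun w => J w - N w) v v := fun v => by
    rw [fderiv_fun_sub (hJ v) (hN v), sub_apply,
      fderiv_apply_self_eq_two_mul_of_homogeneous hJhom (hJ v)]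
    ring
  simp_rw [hidentity]
  simpa using (hI.const_mul 2).sub (tendsto_apply_self_of_tendsto_one_add_norm_mul_norm hI')

theorem exists_forall_le_of_mul_rpow_sub_le {ι : Type*} {f g : ι → ℝ} {a μ c : ℝ}
    (hf : ∀ i, 0 ≤ f i) (ha : 0 < a) (hμ : 0 < μ) (h : ∀ i, a * f i ^ μ - c ≤ g i)
    (hg : BddAbove (Set.range g)) : ∃ P, ∀ i, f i ≤ P := by
  obtain ⟨C, hC⟩ := hg
  refine ⟨((C + c) / a) ^ μ⁻¹, fun i => ?_⟩
  have hle : a * f i ^ μ ≤ C + c := by linarith [h i, hC ⟨i, rfl⟩]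
  refine (Real.le_rpow_inv_iff_of_pos (hf i) ?_ hμ).2 ((le_div_iff₀' ha).2 hle)
  exact div_nonneg ((mul_nonneg ha.le (Real.rpow_nonneg (hf i) _)).trans hle) ha.le

theorem cerami_bounded_general
    {E X : Type*} [NormedAddCommGroup E] [NormedSpace ℝ E]
    [NormedAddCommGroup X] [NormedSpace ℝ X]
    -- continuous embedding E ↪ X
    (ι : E →L[ℝ] X)
    -- ψ : E → ℝ≥0 positively homogeneous of degree one
    (ψ : E → ℝ) (hψ0 : ∀ u, 0 ≤ ψ u)
    (t : ℝ) (ht : t ∈ Set.Ioo (0 : ℝ) 1)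
    -- (H₁)
    (H1 : ∀ u : E, ‖ι u‖ ≤ ψ u ^ (1 - t) * ‖u‖ ^ t)
    (J N : E → ℝ) (hJ : ContDiff ℝ 1 J) (hN : ContDiff ℝ 1 N)
    -- J is 2-homogeneous
    (hJhom : ∀ (τ : ℝ) (u : E), J (τ • u) = τ ^ 2 * J u)
    (a μ : ℝ) (ha : 0 < a) (hμ : 0 < μ) (c : ℝ)
    -- (H₂): N is not 2-homogeneous at infinity
    (H2 : ∀ u : E, a * ψ u ^ μ - c ≤ |fderiv ℝ N u u - 2 * N u|)
    (k : ℝ) (hk : 0 < k)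
    -- (H₃)
    (H3 : ∀ u : E, k * ‖u‖ ^ 2 ≤ J u)
    (b d q : ℝ) (hb : 0 < b) (hq : 2 < q) (hqt : q * t < 2)
    -- (H₄)
    (H4 : ∀ u : E, |N u| ≤ b * ‖ι u‖ ^ q + d)
    -- the Cerami sequence
    (α : ℝ) (u : ℕ → E)
    (hI : Tendsto (fun n => J (u n) - N (u n)) atTop (𝓝 α))
    (hI' : Tendsto (fun n => (1 + ‖u n‖) * ‖fderiv ℝ (fun v => J v - N v) (u n)‖)
      atTop (𝓝 0)) :
    ∃ M : ℝ, ∀ n, ‖u n‖ ≤ M := by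
  have hdefect := tendsto_fderiv_apply_self_sub_two_mul_of_cerami
    (hJ.differentiable one_ne_zero) (hN.differentiable one_ne_zero) hJhom hI hI'
  obtain ⟨P, hψP⟩ := exists_forall_le_of_mul_rpow_sub_le (fun n => hψ0 (u n)) ha hμ
    (fun n => H2 (u n)) hdefect.abs.bddAbove_range
  obtain ⟨D, hD⟩ := hI.bddAbove_range
  obtain ⟨M, hM⟩ := exists_le_of_mul_sq_le_add_mul_rpow hk hqt (D + d) (b * P ^ ((1 - t) * q))
  refine ⟨M, fun n => hM _ ?_⟩
  calc k * ‖u n‖ ^ 2 ≤ (J (u n) - N (u n)) + N (u n) := by linarith [H3 (u n)]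
    _ ≤ D + (b * ‖ι (u n)‖ ^ q + d) :=
      add_le_add (hD ⟨n, rfl⟩) ((le_abs_self _).trans (H4 _))
    _ ≤ D + (b * (P ^ ((1 - t) * q) * ‖u n‖ ^ (q * t)) + d) := by
      gcongr
      exact rpow_le_of_le_rpow_mul_rpow (norm_nonneg _) (hψ0 _) (norm_nonneg _) (hψP n)
        ht.2.le (by linarith) (H1 (u n))
    _ = D + d + b * P ^ ((1 - t) * q) * ‖u n‖ ^ (q * t) := by ring

/-- Cerami-type boundedness: under (H₁)–(H₄) with `q t < 2`, every sequence with
`I(uₙ) → α` and `(1+‖uₙ‖)‖I'(uₙ)‖ → 0` is bounded, where `I = J - N`. -/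
theorem cerami_bounded
    {E X : Type*} [NormedAddCommGroup E] [NormedSpace ℝ E] [CompleteSpace E]
    [NormedAddCommGroup X] [NormedSpace ℝ X]
    -- E is reflexive
    (hrefl : Function.Surjective (NormedSpace.inclusionInDoubleDual ℝ E))
    -- continuous embedding E ↪ X
    (ι : E →L[ℝ] X) (hι : Function.Injective ι)
    -- ψ : E → ℝ≥0 positively homogeneous of degree one
    (ψ : E → ℝ) (hψ0 : ∀ u, 0 ≤ ψ u)
    (hψhom : ∀ (τ : ℝ) (u : E), 0 ≤ τ → ψ (τ • u) = τ * ψ u)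
    (t : ℝ) (ht : t ∈ Set.Ioo (0 : ℝ) 1)
    -- (H₁)
    (H1 : ∀ u : E, ‖ι u‖ ≤ ψ u ^ (1 - t) * ‖u‖ ^ t)
    (J N : E → ℝ) (hJ : ContDiff ℝ 1 J) (hN : ContDiff ℝ 1 N)
    -- J is 2-homogeneous
    (hJhom : ∀ (τ : ℝ) (u : E), J (τ • u) = τ ^ 2 * J u)
    (a μ : ℝ) (ha : 0 < a) (hμ : 0 < μ) (c : ℝ)
    -- (H₂): N is not 2-homogeneous at infinity
    (H2 : ∀ u : E, a * ψ u ^ μ - c ≤ |fderiv ℝ N u u - 2 * N u|)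
    (k : ℝ) (hk : 0 < k)
    -- (H₃)
    (H3 : ∀ u : E, k * ‖u‖ ^ 2 ≤ J u)
    (b d q : ℝ) (hb : 0 < b) (hd : 0 < d) (hq : 2 < q) (hqt : q * t < 2)
    -- (H₄)
    (H4 : ∀ u : E, |N u| ≤ b * ‖ι u‖ ^ q + d)
    -- the Cerami sequence
    (α : ℝ) (u : ℕ → E)
    (hI : Tendsto (fun n => J (u n) - N (u n)) atTop (𝓝 α))
    (hI' : Tendsto (fun n => (1 + ‖u n‖) * ‖fderiv ℝ (fun v => J v - N v) (u n)‖)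
      atTop (𝓝 0)) :
    ∃ M : ℝ, ∀ n, ‖u n‖ ≤ M :=
  cerami_bounded_general ι ψ hψ0 t ht H1 J N hJ hN hJhom a μ ha hμ c H2 k hk H3 b d q hb hq hqt H4 α
    u hI hI'
end

section
/- Let E be a real Banach space and I = J − N with J, N ∈ C¹(E,ℝ), where N' : E → E* is a compact operator and J' : E → E* is an isomorphism onto its image J'(E) (i.e., injective with continuous inverse on its range). If any sequence (uₙ) with I(uₙ) → c and (1+‖uₙ‖)‖I'(uₙ)‖_{E*} → 0 has a bounded subsequence, then any such sequence has a convergent subsequence. In other words, condition (Ĉ)_c implies the Cerami condition (C)_c. -/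
/-!
Along a bounded subsequence of a Cerami sequence, `N'(uₙ)` stays in a compact set, so a further
subsequence has `N'(uₙ) → L`. Since `I'(uₙ) = J'(uₙ) - N'(uₙ) → 0`, also `J'(uₙ) → L`, and because
`J'` is a closed embedding, `L = J'(u)` with `uₙ → u`.
-/

open Filter Topology

theorem tendsto_zero_of_one_add_norm_mul_tendsto_zero {E F : Type*} [SeminormedAddCommGroup E]
    [SeminormedAddCommGroup F] {u : ℕ → E} {f : ℕ → F}
    (h : Tendsto (fun n => (1 + ‖u n‖) * ‖f n‖) atTop (𝓝 0)) :
    Tendsto f atTop (𝓝 0) := by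
  refine tendsto_zero_iff_norm_tendsto_zero.mpr <|
    squeeze_zero (fun n => norm_nonneg _) (fun n => ?_) h
  exact le_mul_of_one_le_left (norm_nonneg _) (le_add_of_nonneg_right (norm_nonneg _))

theorem Topology.IsClosedEmbedding.exists_tendsto_of_tendsto {X Y α : Type*} [TopologicalSpace X]
    [TopologicalSpace Y] {Φ : X → Y} (hΦ : IsClosedEmbedding Φ) {l : Filter α} [l.NeBot]
    {x : α → X} {L : Y} (h : Tendsto (Φ ∘ x) l (𝓝 L)) :
    ∃ a, Tendsto x l (𝓝 a) := by
  obtain ⟨a, rfl⟩ : L ∈ Set.range Φ :=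
    hΦ.isClosed_range.mem_of_tendsto h (Eventually.of_forall fun n => ⟨x n, rfl⟩)
  exact ⟨a, hΦ.isEmbedding.tendsto_nhds_iff.mpr h⟩

theorem exists_subseq_tendsto_of_sub_tendsto_zero {X Y : Type*} [TopologicalSpace X]
    [TopologicalSpace Y] [AddGroup Y] [ContinuousAdd Y] [FirstCountableTopology Y]
    {Φ Ψ : X → Y} (hΦ : IsClosedEmbedding Φ) {K : Set Y} (hK : IsCompact K) {x : ℕ → X}
    (hxK : ∀ n, Ψ (x n) ∈ K) (hsub : Tendsto (fun n => Φ (x n) - Ψ (x n)) atTop (𝓝 0)) :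
    ∃ φ : ℕ → ℕ, StrictMono φ ∧ ∃ a, Tendsto (x ∘ φ) atTop (𝓝 a) := by
  obtain ⟨L, -, φ, hφ, hL⟩ := hK.tendsto_subseq hxK
  have hΦL : Tendsto (Φ ∘ x ∘ φ) atTop (𝓝 L) := by
    simpa only [Function.comp_def, sub_add_cancel, zero_add] using
      (hsub.comp hφ.tendsto_atTop).add hL
  exact ⟨φ, hφ, hΦ.exists_tendsto_of_tendsto hΦL⟩

theorem cerami_hatC_implies_C_general
    {E : Type*} [NormedAddCommGroup E] [NormedSpace ℝ E]
    (J N : E → ℝ) (hJ : ContDiff ℝ 1 J) (hN : ContDiff ℝ 1 N)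
    -- N' : E → E* is a compact operator
    (hNcompact : ∀ s : Set E, Bornology.IsBounded s →
      IsCompact (closure ((fun u => fderiv ℝ N u) '' s)))
    -- J' : E → E* is an isomorphism from E onto J'(E)
    (hJ'emb : Topology.IsClosedEmbedding (fun u : E => fderiv ℝ J u))
    (c : ℝ)
    -- condition (Ĉ)_c
    (hChat : ∀ u : ℕ → E,
      Tendsto (fun n => J (u n) - N (u n)) atTop (𝓝 c) →
      Tendsto (fun n => (1 + ‖u n‖) * ‖fderiv ℝ (fun v => J v - N v) (u n)‖)
        atTop (𝓝 0) →
      ∃ φ : ℕ → ℕ, StrictMono φ ∧ ∃ M : ℝ, ∀ n, ‖u (φ n)‖ ≤ M) :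
    -- condition (C)_c
    ∀ u : ℕ → E,
      Tendsto (fun n => J (u n) - N (u n)) atTop (𝓝 c) →
      Tendsto (fun n => (1 + ‖u n‖) * ‖fderiv ℝ (fun v => J v - N v) (u n)‖)
        atTop (𝓝 0) →
      ∃ φ : ℕ → ℕ, StrictMono φ ∧ ∃ l : E, Tendsto (fun n => u (φ n)) atTop (𝓝 l) := by
  intro u hc hcer
  obtain ⟨φ, hφ, M, hM⟩ := hChat u hc hcer
  have hderiv (x : E) : fderiv ℝ (fun v => J v - N v) x = fderiv ℝ J x - fderiv ℝ N x :=
    fderiv_fun_sub (hJ.differentiable one_ne_zero x) (hN.differentiable one_ne_zero x)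
  have hsmall : Tendsto (fun n => fderiv ℝ J (u (φ n)) - fderiv ℝ N (u (φ n))) atTop (𝓝 0) := by
    simpa only [Function.comp_def, hderiv] using
      (tendsto_zero_of_one_add_norm_mul_tendsto_zero hcer).comp hφ.tendsto_atTop
  have hbounded : ∀ n, fderiv ℝ N (u (φ n)) ∈
      closure ((fun v => fderiv ℝ N v) '' Metric.closedBall 0 M) := fun n =>
    subset_closure ⟨u (φ n), mem_closedBall_zero_iff.mpr (hM n), rfl⟩
  obtain ⟨ψ, hψ, l, hl⟩ := exists_subseq_tendsto_of_sub_tendsto_zero hJ'emb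
    (hNcompact _ Metric.isBounded_closedBall) hbounded hsmall
  exact ⟨φ ∘ ψ, hφ.comp hψ, l, hl⟩

/-- If `N'` is a compact (nonlinear) operator and `J'` is an isomorphism of `E`
onto its image `J'(E)`, then condition `(Ĉ)_c` implies the Cerami condition `(C)_c`
for `I = J - N`. -/
theorem cerami_hatC_implies_C
    {E : Type*} [NormedAddCommGroup E] [NormedSpace ℝ E] [CompleteSpace E]
    (J N : E → ℝ) (hJ : ContDiff ℝ 1 J) (hN : ContDiff ℝ 1 N)
    -- N' : E → E* is a compact operator
    (hNcompact : ∀ s : Set E, Bornology.IsBounded s →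
      IsCompact (closure ((fun u => fderiv ℝ N u) '' s)))
    -- J' : E → E* is an isomorphism from E onto J'(E)
    (hJ'emb : Topology.IsClosedEmbedding (fun u : E => fderiv ℝ J u))
    (c : ℝ)
    -- condition (Ĉ)_c
    (hChat : ∀ u : ℕ → E,
      Tendsto (fun n => J (u n) - N (u n)) atTop (𝓝 c) →
      Tendsto (fun n => (1 + ‖u n‖) * ‖fderiv ℝ (fun v => J v - N v) (u n)‖)
        atTop (𝓝 0) →
      ∃ φ : ℕ → ℕ, StrictMono φ ∧ ∃ M : ℝ, ∀ n, ‖u (φ n)‖ ≤ M) :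
    -- condition (C)_c
    ∀ u : ℕ → E,
      Tendsto (fun n => J (u n) - N (u n)) atTop (𝓝 c) →
      Tendsto (fun n => (1 + ‖u n‖) * ‖fderiv ℝ (fun v => J v - N v) (u n)‖)
        atTop (𝓝 0) →
      ∃ φ : ℕ → ℕ, StrictMono φ ∧ ∃ l : E, Tendsto (fun n => u (φ n)) atTop (𝓝 l) :=
  cerami_hatC_implies_C_general J N hJ hN hNcompact hJ'emb c hChat
end

section
/- Let V = span(φ₁) be a one-dimensional subspace of a real Banach space E = V ⊕ W with W closed, let P : E → V be the continuous linear projection onto V along W, let B = {v ∈ V : ‖v‖ ≤ R} with R > 0, and let γ : B → E be continuous with γ(v) = v for all v ∈ ∂B. Then γ(B) ∩ W ≠ ∅. -/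
/-!
Compose `γ` with the projection `P` and a continuous functional `ψ` with `ψ φ₁ ≠ 0`. The real
function `ψ ∘ P ∘ γ` is continuous on the ball `B` of `V = span {φ₁}`, which is connected, and it
is odd on the sphere `∂B`, where `γ` is the identity; so it takes both signs on `B` and vanishes
at some `v ∈ B`. Since `ψ` is injective on `V ∋ P (γ v)`, this means `P (γ v) = 0`, i.e.
`γ v ∈ W = ker P`.
-/

open Submodule

section Projection

variable {R M : Type*} [Ring R] [AddCommGroup M] [Module R M] {V W : Submodule R M}
  {P : M →ₗ[R] M}

theorem apply_mem_and_sub_apply_mem_of_codisjoint (hVW : Codisjoint V W)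
    (hPV : ∀ v ∈ V, P v = v) (hPW : ∀ w ∈ W, P w = 0) (x : M) :
    P x ∈ V ∧ x - P x ∈ W := by
  obtain ⟨v, hv, w, hw, rfl⟩ := mem_sup.mp (hVW.eq_top ▸ mem_top : x ∈ V ⊔ W)
  rw [map_add, hPV v hv, hPW w hw, add_zero, add_sub_cancel_left]
  exact ⟨hv, hw⟩

end Projection

theorem eq_zero_of_mem_span_singleton_of_apply_eq_zero {K M : Type*} [Field K] [AddCommGroup M]
    [Module K M] {φ x : M} {ψ : M →ₗ[K] K} (hψ : ψ φ ≠ 0) (hx : x ∈ span K {φ})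
    (h : ψ x = 0) : x = 0 := by
  obtain ⟨c, rfl⟩ := mem_span_singleton.mp hx
  rw [map_smul, smul_eq_mul, mul_eq_zero] at h
  rw [h.resolve_right hψ, zero_smul]

theorem exists_eq_zero_of_odd_on_sphere {E : Type*} [NormedAddCommGroup E] [NormedSpace ℝ E]
    {V : Submodule ℝ E} (hV : V ≠ ⊥) {R : ℝ} (hR : 0 ≤ R) {G : E → ℝ}
    (hG : ContinuousOn G {v | v ∈ V ∧ ‖v‖ ≤ R})
    (hodd : ∀ v ∈ V, ‖v‖ = R → G (-v) = -G v) :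
    ∃ v ∈ {v | v ∈ V ∧ ‖v‖ ≤ R}, G v = 0 := by
  have : Nontrivial V := nontrivial_iff_ne_bot.mpr hV
  obtain ⟨⟨u, huV⟩, hu⟩ := exists_norm_eq V hR
  replace hu : ‖u‖ = R := hu
  have hB : IsPreconnected {v | v ∈ V ∧ ‖v‖ ≤ R} :=
    ((convexOn_norm V.convex).convex_le R).isPreconnected
  have hu_mem : u ∈ {v | v ∈ V ∧ ‖v‖ ≤ R} := ⟨huV, hu.le⟩
  have hnegu_mem : -u ∈ {v | v ∈ V ∧ ‖v‖ ≤ R} := ⟨V.neg_mem huV, (norm_neg u ▸ hu).le⟩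
  rcases le_total (G u) 0 with hGu | hGu
  · exact hB.intermediate_value₂ hu_mem hnegu_mem hG continuousOn_const hGu
      (by linarith [hodd u huV hu])
  · exact hB.intermediate_value₂ hnegu_mem hu_mem hG continuousOn_const
      (by linarith [hodd u huV hu]) hGu

theorem linking_ball_meets_complement_general
    {E : Type*} [NormedAddCommGroup E] [NormedSpace ℝ E]
    (φ₁ : E) (hφ₁ : φ₁ ≠ 0)
    (W : Submodule ℝ E)
    (hcompl : IsCompl (Submodule.span ℝ {φ₁}) W)
    (P : E →L[ℝ] E)
    (hPV : ∀ v ∈ Submodule.span ℝ {φ₁}, P v = v)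
    (hPW : ∀ w ∈ W, P w = 0)
    (R : ℝ) (hR : 0 < R)
    (γ : E → E)
    (hγcont : ContinuousOn γ {v : E | v ∈ Submodule.span ℝ {φ₁} ∧ ‖v‖ ≤ R})
    (hγbd : ∀ v ∈ Submodule.span ℝ {φ₁}, ‖v‖ = R → γ v = v) :
    ∃ v : E, v ∈ Submodule.span ℝ {φ₁} ∧ ‖v‖ ≤ R ∧ γ v ∈ W := by
  obtain ⟨ψ, hψ⟩ := SeparatingDual.exists_ne_zero (R := ℝ) hφ₁
  have hproj := apply_mem_and_sub_apply_mem_of_codisjoint (P := (P : E →ₗ[ℝ] E))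
    hcompl.codisjoint hPV hPW
  obtain ⟨v, ⟨hvV, hvR⟩, hv⟩ := exists_eq_zero_of_odd_on_sphere
    (G := fun v => ψ (P (γ v))) ((span_singleton_eq_bot (R := ℝ)).not.mpr hφ₁) hR.le
    ((ψ.comp P).continuous.comp_continuousOn hγcont)
    (fun v hv hvR => by
      simp only [hγbd v hv hvR, hγbd (-v) (neg_mem hv) (by rwa [norm_neg]), map_neg])
  have hPγv : P (γ v) = 0 :=
    eq_zero_of_mem_span_singleton_of_apply_eq_zero (ψ := (ψ : E →ₗ[ℝ] ℝ)) hψ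
      (hproj (γ v)).1 hv
  refine ⟨v, hvV, hvR, ?_⟩
  simpa [hPγv] using (hproj (γ v)).2

/-- Linking: if `γ : B → E` is continuous on the ball `B` of the one-dimensional
space `V = span(φ₁)` and equals the identity on `∂B`, then `γ(B)` meets the
complement `W`. -/
theorem linking_ball_meets_complement
    {E : Type*} [NormedAddCommGroup E] [NormedSpace ℝ E]
    (φ₁ : E) (hφ₁ : φ₁ ≠ 0)
    (W : Submodule ℝ E) (hWclosed : IsClosed (W : Set E))
    (hcompl : IsCompl (Submodule.span ℝ {φ₁}) W)
    (P : E →L[ℝ] E)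
    (hPV : ∀ v ∈ Submodule.span ℝ {φ₁}, P v = v)
    (hPW : ∀ w ∈ W, P w = 0)
    (R : ℝ) (hR : 0 < R)
    (γ : E → E)
    (hγcont : ContinuousOn γ {v : E | v ∈ Submodule.span ℝ {φ₁} ∧ ‖v‖ ≤ R})
    (hγbd : ∀ v ∈ Submodule.span ℝ {φ₁}, ‖v‖ = R → γ v = v) :
    ∃ v : E, v ∈ Submodule.span ℝ {φ₁} ∧ ‖v‖ ≤ R ∧ γ v ∈ W :=
  linking_ball_meets_complement_general φ₁ hφ₁ W hcompl P hPV hPW R hR γ hγcont hγbd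
end

section
/- Let H be a real Hilbert space, W ⊂ H a closed subspace, λ₁, d > 0 with ‖w‖² ≥ (λ₁ + d)|w|₂² for all w ∈ W, and G : Ω × ℝ → ℝ a Carathéodory function such that for every ε > 0 there exists δ > 0 with 2G(x,s) ≤ ε s² for all |s| > δ and a.e. x ∈ Ω, and G is bounded above on bounded s-intervals uniformly in x. Then F(w) := ½‖w‖² − (λ₁/2)|w|₂² − ∫_Ω G(x,w)dx satisfies F(w) ≥ N‖w‖² − M for all w ∈ W with N = ½(1 − (λ₁+ε)/(λ₁+d)) > 0 (for ε < d) and some constant M. In particular F(w) → ∞ as ‖w‖ → ∞ in W (F is coercive on W). -/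
/-!
Split `G(x,s)` at the threshold `δ` of `(G₄)`: beyond it `G ≤ ½εs²`, below it `G` is bounded by a
constant, so `G(x,s) ≤ ½εs² + C` everywhere and `∫ G(x,w) ≤ ½ε|w|₂² + C|Ω|`. The gap inequality
`(λ₁+d)|w|₂² ≤ ‖w‖²` then absorbs the quadratic terms `½(λ₁+ε)|w|₂²` into `‖w‖²`, leaving a
positive multiple `½(1 - (λ₁+ε)/(λ₁+d))` of `‖w‖²` when `ε < d`.
-/

open MeasureTheory

lemma le_half_mul_sq_add_max_of_bounds {g : ℝ → ℝ} {ε δ C : ℝ} (hε : 0 ≤ ε)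
    (hlarge : ∀ s, δ < |s| → 2 * g s ≤ ε * s ^ 2) (hsmall : ∀ s, |s| ≤ δ → g s ≤ C) (s : ℝ) :
    g s ≤ ε / 2 * s ^ 2 + max C 0 := by
  have hsq : 0 ≤ ε / 2 * s ^ 2 := by positivity
  rcases le_or_gt |s| δ with hs | hs
  · linarith [hsmall s hs, le_max_left C 0]
  · linarith [hlarge s hs, le_max_right C 0]

lemma exists_integral_le_half_mul_integral_sq_add {α : Type*} [MeasurableSpace α]
    {μ : Measure α} [IsFiniteMeasure μ] {G : α → ℝ → ℝ} {ε δ : ℝ} (hε : 0 ≤ ε)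
    (hlarge : ∀ᵐ x ∂μ, ∀ s, δ < |s| → 2 * G x s ≤ ε * s ^ 2)
    (hsmall : ∃ C, ∀ᵐ x ∂μ, ∀ s, |s| ≤ δ → G x s ≤ C) :
    ∃ M, ∀ w : α → ℝ, Integrable (fun x => G x (w x)) μ → Integrable (fun x => w x ^ 2) μ →
      ∫ x, G x (w x) ∂μ ≤ ε / 2 * ∫ x, w x ^ 2 ∂μ + M := by
  obtain ⟨C, hC⟩ := hsmall
  refine ⟨max C 0 * μ.real Set.univ, fun w hGw hw => ?_⟩
  have hpointwise : ∀ᵐ x ∂μ, G x (w x) ≤ ε / 2 * w x ^ 2 + max C 0 := by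
    filter_upwards [hlarge, hC] with x hxl hxs
    exact le_half_mul_sq_add_max_of_bounds hε hxl hxs (w x)
  calc ∫ x, G x (w x) ∂μ ≤ ∫ x, (ε / 2 * w x ^ 2 + max C 0) ∂μ :=
        integral_mono_ae hGw ((hw.const_mul _).add (integrable_const _)) hpointwise
    _ = ε / 2 * ∫ x, w x ^ 2 ∂μ + max C 0 * μ.real Set.univ := by
        rw [integral_add (hw.const_mul _) (integrable_const _), integral_const_mul,
          integral_const, smul_eq_mul, mul_comm (μ.real _)]

lemma energy_lower_bound_of_gap {lam1 d ε I J g M : ℝ} (hlam1 : 0 < lam1) (hd : 0 < d)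
    (hε : 0 < ε) (hgap : (lam1 + d) * J ≤ I) (hg : g ≤ ε / 2 * J + M) :
    1 / 2 * (1 - (lam1 + ε) / (lam1 + d)) * I - M ≤ 1 / 2 * I - lam1 / 2 * J - g := by
  have hJ : (lam1 + ε) * J ≤ (lam1 + ε) / (lam1 + d) * I := by
    rw [div_mul_eq_mul_div, le_div_iff₀ (by linarith)]
    nlinarith
  nlinarith

lemma le_of_coercive_bound {N M I F C : ℝ} (hN : 0 < N) (hF : N * I - M ≤ F)
    (hI : (C + M) / N ≤ I) : C ≤ F := by
  rw [div_le_iff₀' hN] at hI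
  linarith

theorem coercive_on_complement_general
    {n : ℕ} (Ω : Set (EuclideanSpace ℝ (Fin n)))
    (hΩbd : Bornology.IsBounded Ω)
    (G : EuclideanSpace ℝ (Fin n) → ℝ → ℝ)
    (lam1 d : ℝ) (hlam1 : 0 < lam1) (hd : 0 < d)
    -- (G₄): for every ε>0, 2G(x,s) ≤ εs² for |s| large, a.e. x
    (hG4 : ∀ ε > (0:ℝ), ∃ δ > (0:ℝ), ∀ᵐ x ∂(volume.restrict Ω),
      ∀ s : ℝ, δ < |s| → 2 * G x s ≤ ε * s ^ 2)
    -- G bounded above on bounded s-intervals, uniformly in x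
    (hGbd : ∀ δ > (0:ℝ), ∃ C : ℝ, ∀ᵐ x ∂(volume.restrict Ω),
      ∀ s : ℝ, |s| ≤ δ → G x s ≤ C)
    (W : Set (EuclideanSpace ℝ (Fin n) → ℝ))
    (hW : ∀ w ∈ W, (lam1 + d) * ∫ x in Ω, (w x) ^ 2 ≤
      ∫ x in Ω, ‖fderiv ℝ w x‖ ^ 2) :
    ∀ ε : ℝ, 0 < ε → ε < d → ∃ M : ℝ,
      (∀ w ∈ W,
        IntegrableOn (fun x => ‖fderiv ℝ w x‖ ^ 2) Ω →
        IntegrableOn (fun x => (w x) ^ 2) Ω →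
        IntegrableOn (fun x => G x (w x)) Ω →
        (1/2) * (1 - (lam1 + ε) / (lam1 + d)) * (∫ x in Ω, ‖fderiv ℝ w x‖ ^ 2) - M ≤
          (1/2) * (∫ x in Ω, ‖fderiv ℝ w x‖ ^ 2)
            - (lam1 / 2) * (∫ x in Ω, (w x) ^ 2) - ∫ x in Ω, G x (w x)) ∧
      -- in particular F(w) → ∞ as ‖w‖ → ∞ on W
      (∀ C : ℝ, ∃ K : ℝ, ∀ w ∈ W,
        IntegrableOn (fun x => ‖fderiv ℝ w x‖ ^ 2) Ω →
        IntegrableOn (fun x => (w x) ^ 2) Ω →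
        IntegrableOn (fun x => G x (w x)) Ω →
        K ≤ ∫ x in Ω, ‖fderiv ℝ w x‖ ^ 2 →
        C ≤ (1/2) * (∫ x in Ω, ‖fderiv ℝ w x‖ ^ 2)
            - (lam1 / 2) * (∫ x in Ω, (w x) ^ 2) - ∫ x in Ω, G x (w x)) := by
  intro ε hε hεd
  have : IsFiniteMeasure (volume.restrict Ω) :=
    isFiniteMeasure_restrict.mpr hΩbd.measure_lt_top.ne
  obtain ⟨δ, hδ, hlarge⟩ := hG4 ε hε
  obtain ⟨M, hM⟩ := exists_integral_le_half_mul_integral_sq_add hε.le hlarge (hGbd δ hδ)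
  have hbound : ∀ w ∈ W, IntegrableOn (fun x => ‖fderiv ℝ w x‖ ^ 2) Ω →
      IntegrableOn (fun x => (w x) ^ 2) Ω → IntegrableOn (fun x => G x (w x)) Ω →
      (1/2) * (1 - (lam1 + ε) / (lam1 + d)) * (∫ x in Ω, ‖fderiv ℝ w x‖ ^ 2) - M ≤
        (1/2) * (∫ x in Ω, ‖fderiv ℝ w x‖ ^ 2)
          - (lam1 / 2) * (∫ x in Ω, (w x) ^ 2) - ∫ x in Ω, G x (w x) :=
    fun w hw _ hw2 hGw => energy_lower_bound_of_gap hlam1 hd hε (hW w hw) (hM w hGw hw2)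
  have hN : 0 < (1/2) * (1 - (lam1 + ε) / (lam1 + d)) := by
    have : (lam1 + ε) / (lam1 + d) < 1 := (div_lt_one (by linarith)).mpr (by linarith)
    linarith
  exact ⟨M, hbound, fun C => ⟨(C + M) / ((1/2) * (1 - (lam1 + ε) / (lam1 + d))),
    fun w hw h1 h2 h3 hK => le_of_coercive_bound hN (hbound w hw h1 h2 h3) hK⟩⟩

/-- Coercivity of `F` on the complement `W`: under `(G₄)` and the gap inequality
`‖w‖² ≥ (λ₁+d)|w|₂²` on `W`, one has `F(w) ≥ N‖w‖² − M` with `N > 0`. -/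
theorem coercive_on_complement
    {n : ℕ} (Ω : Set (EuclideanSpace ℝ (Fin n))) (hΩopen : IsOpen Ω)
    (hΩbd : Bornology.IsBounded Ω)
    (G : EuclideanSpace ℝ (Fin n) → ℝ → ℝ)
    (lam1 d : ℝ) (hlam1 : 0 < lam1) (hd : 0 < d)
    -- (G₄): for every ε>0, 2G(x,s) ≤ εs² for |s| large, a.e. x
    (hG4 : ∀ ε > (0:ℝ), ∃ δ > (0:ℝ), ∀ᵐ x ∂(volume.restrict Ω),
      ∀ s : ℝ, δ < |s| → 2 * G x s ≤ ε * s ^ 2)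
    -- G bounded above on bounded s-intervals, uniformly in x
    (hGbd : ∀ δ > (0:ℝ), ∃ C : ℝ, ∀ᵐ x ∂(volume.restrict Ω),
      ∀ s : ℝ, |s| ≤ δ → G x s ≤ C)
    (W : Set (EuclideanSpace ℝ (Fin n) → ℝ))
    (hW : ∀ w ∈ W, (lam1 + d) * ∫ x in Ω, (w x) ^ 2 ≤
      ∫ x in Ω, ‖fderiv ℝ w x‖ ^ 2) :
    ∀ ε : ℝ, 0 < ε → ε < d → ∃ M : ℝ,
      (∀ w ∈ W,
        IntegrableOn (fun x => ‖fderiv ℝ w x‖ ^ 2) Ω →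
        IntegrableOn (fun x => (w x) ^ 2) Ω →
        IntegrableOn (fun x => G x (w x)) Ω →
        (1/2) * (1 - (lam1 + ε) / (lam1 + d)) * (∫ x in Ω, ‖fderiv ℝ w x‖ ^ 2) - M ≤
          (1/2) * (∫ x in Ω, ‖fderiv ℝ w x‖ ^ 2)
            - (lam1 / 2) * (∫ x in Ω, (w x) ^ 2) - ∫ x in Ω, G x (w x)) ∧
      -- in particular F(w) → ∞ as ‖w‖ → ∞ on W
      (∀ C : ℝ, ∃ K : ℝ, ∀ w ∈ W,
        IntegrableOn (fun x => ‖fderiv ℝ w x‖ ^ 2) Ω →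
        IntegrableOn (fun x => (w x) ^ 2) Ω →
        IntegrableOn (fun x => G x (w x)) Ω →
        K ≤ ∫ x in Ω, ‖fderiv ℝ w x‖ ^ 2 →
        C ≤ (1/2) * (∫ x in Ω, ‖fderiv ℝ w x‖ ^ 2)
            - (lam1 / 2) * (∫ x in Ω, (w x) ^ 2) - ∫ x in Ω, G x (w x)) :=
  coercive_on_complement_general Ω hΩbd G lam1 d hlam1 hd hG4 hGbd W hW
end
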